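/- If A ⊆ ℕ^ℕ is closed in the product topology on ℕ^ℕ (with ℕ discrete), then the Gale–Stewart game with payoff set A is determined: either player I has a winning strategy or player II has a winning strategy. -/
import Mathlib


/-- The finite position given by the first `n` moves of the infinite play `x`. -/
def position (x : ℕ → ℕ) (n : ℕ) : List ℕ := List.ofFn fun i : Fin n => x i.val

/-- `x` is an infinite play in which player I (moving at even indices) follows
the strategy `σ`, i.e. each even-indexed move is the one `σ` assigns to the
current finite position. Player II's moves are arbitrary. -/
def FollowsI (σ : List ℕ → ℕ) (x : ℕ → ℕ) : Prop :=
  ∀ n : ℕ, Even n → x n = σ (position x n)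

/-- `x` is an infinite play in which player II (moving at odd indices) follows
the strategy `τ`. Player I's moves are arbitrary. -/
def FollowsII (τ : List ℕ → ℕ) (x : ℕ → ℕ) : Prop :=
  ∀ n : ℕ, Odd n → x n = τ (position x n)

/-- `σ` is a winning strategy for player I in the Gale–Stewart game with payoff
set `A`: every play in which I follows `σ` lands in `A`. -/
def WinningStratI (A : Set (ℕ → ℕ)) (σ : List ℕ → ℕ) : Prop :=
  ∀ x : ℕ → ℕ, FollowsI σ x → x ∈ A

/-- `τ` is a winning strategy for player II in the Gale–Stewart game with payoff
set `A`: every play in which II follows `τ` avoids `A`. -/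
def WinningStratII (A : Set (ℕ → ℕ)) (τ : List ℕ → ℕ) : Prop :=
  ∀ x : ℕ → ℕ, FollowsII τ x → x ∉ A

/-- The Gale–Stewart game with payoff set `A` is determined: one of the two
players has a winning strategy. -/
def Determined (A : Set (ℕ → ℕ)) : Prop :=
  (∃ σ, WinningStratI A σ) ∨ (∃ τ, WinningStratII A τ)

lemma position_length (x : ℕ → ℕ) (n : ℕ) : (position x n).length = n := by
  simp [position]

lemma position_succ (x : ℕ → ℕ) (n : ℕ) :
    position x (n+1) = position x n ++ [x n] := by
  rw [position, List.ofFn_succ']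
  simp [position, List.concat_eq_append, Fin.last]

lemma position_getD (x : ℕ → ℕ) {k n : ℕ} (h : k < n) :
    (position x n).getD k 0 = x k := by
  rw [List.getD_eq_getElem _ _ (by simpa [position_length] using h)]
  simp [position]

/-- Player II has a winning strategy in the subgame starting at position `p`. -/
def Lost (A : Set (ℕ → ℕ)) (p : List ℕ) : Prop :=
  ∃ τ : List ℕ → ℕ, ∀ x : ℕ → ℕ, position x p.length = p →
    (∀ n, p.length ≤ n → Odd n → x n = τ (position x n)) → x ∉ A

lemma lost_of_disjoint {A : Set (ℕ → ℕ)} {p : List ℕ}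
    (h : ∀ x, position x p.length = p → x ∉ A) : Lost A p :=
  ⟨fun _ => 0, fun x hx _ => h x hx⟩

lemma lost_of_forall {A : Set (ℕ → ℕ)} {p : List ℕ} (_hev : Even p.length)
    (h : ∀ a, Lost A (p ++ [a])) : Lost A p := by
  choose τ hτ using h
  refine ⟨fun q => if hq : p.length < q.length then τ (q.getD p.length 0) q else 0, ?_⟩
  intro x hx hfol
  apply hτ (x p.length) x
  · rw [List.length_append, List.length_singleton, position_succ, hx]
  · intro n hn hodd
    have hlt : p.length < n := by
      rw [List.length_append, List.length_singleton] at hn; omega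
    have hcond : p.length < (position x n).length := by rw [position_length]; exact hlt
    rw [hfol n (le_of_lt hlt) hodd]
    beta_reduce
    rw [dif_pos hcond, position_getD x hlt]

lemma lost_of_exists {A : Set (ℕ → ℕ)} {p : List ℕ} {b : ℕ} (hodd : Odd p.length)
    (h : Lost A (p ++ [b])) : Lost A p := by
  obtain ⟨τb, hτ⟩ := h
  refine ⟨fun q => if q.length = p.length then b else τb q, ?_⟩
  intro x hx hfol
  have hb : x p.length = b := by
    rw [hfol p.length le_rfl hodd]
    beta_reduce
    rw [if_pos (position_length ..)]
  apply hτ x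
  · rw [List.length_append, List.length_singleton, position_succ, hx, hb]
  · intro n hn hodd'
    have hne : n ≠ p.length := by
      rw [List.length_append, List.length_singleton] at hn; omega
    have hge : p.length ≤ n := by
      rw [List.length_append, List.length_singleton] at hn; omega
    rw [hfol n hge hodd']
    beta_reduce
    rw [if_neg (by rw [position_length]; exact hne)]

noncomputable def gsStrat (A : Set (ℕ → ℕ)) : List ℕ → ℕ :=
  fun q => @dite ℕ (∃ a, ¬ Lost A (q ++ [a])) (Classical.dec _) (fun hq => hq.choose) (fun _ => 0)

lemma gsStrat_spec {A : Set (ℕ → ℕ)} {q : List ℕ} (h : ∃ a, ¬ Lost A (q ++ [a])) :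
    ¬ Lost A (q ++ [gsStrat A q]) := by
  rw [gsStrat, dif_pos h]; exact h.choose_spec

/-- Gale–Stewart: every closed set (in the product topology on `ℕ → ℕ`,
with `ℕ` discrete) is determined. -/
theorem closed_determined (A : Set (ℕ → ℕ)) (hA : IsClosed A) : Determined A := by
  classical
  by_cases h : Lost A []
  · right
    obtain ⟨τ, hτ⟩ := h
    exact ⟨τ, fun x hx => hτ x (by simp [position]) (fun n _ ho => hx n ho)⟩
  · left
    refine ⟨gsStrat A, fun x hx => ?_⟩
    have key : ∀ n, ¬ Lost A (position x n) := by
      intro n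
      induction n with
      | zero => simpa [position] using h
      | succ n ih =>
        rw [position_succ]
        rcases Nat.even_or_odd n with he | ho
        · have hex : ∃ a, ¬ Lost A (position x n ++ [a]) := by
            by_contra hc
            push_neg at hc
            exact ih (lost_of_forall (by rw [position_length]; exact he) hc)
          rw [hx n he]
          exact gsStrat_spec hex
        · intro hl
          exact ih (lost_of_exists (by rw [position_length]; exact ho) hl)
    by_contra hxA
    obtain ⟨n, hn⟩ : ∃ n, ∀ y : ℕ → ℕ, position y n = position x n → y ∉ A := by
      have hopen : IsOpen Aᶜ := hA.isOpen_compl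
      rw [isOpen_pi_iff] at hopen
      obtain ⟨I, u, hu, hsub⟩ := hopen x hxA
      refine ⟨(I.sup id) + 1, fun y hy hyA => ?_⟩
      have hymem : y ∈ (↑I : Set ℕ).pi u := by
        intro i hi
        have hlt : i < I.sup id + 1 := Nat.lt_succ_of_le (Finset.le_sup (f := id) hi)
        have hyi : y i = x i := by
          have := congrArg (fun l => l.getD i 0) hy
          simpa only [position_getD y hlt, position_getD x hlt] using this
        rw [hyi]
        exact (hu i hi).2
      exact hsub hymem hyA
    exact key n (lost_of_disjoint (by rw [position_length]; exact hn))
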